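/- arXiv:1409.5451 — 7 statements merged into one kernel-verified Lean document; each statement's English description precedes it below -/
import Mathlib

section
/- For every simple graph G and integer vector x indexed by the edges of G, x lies in the lattice generated by the cuts of G if and only if x(C) is even for every circuit C of G. -/
/-!
Along any walk from `u` to `v`, the cut `δ(S)` has even weight iff `u` and `v` lie on the same
side of `S`; so every cut, hence every lattice vector, is even on closed walks, in particular on
cycles. Conversely, if `x` is even on cycles it is even on all closed walks: shortcutting a
closed walk to a path (`Walk.bypass`) only ever removes a cycle or an edge traversed back and
forth. Hence the parity of `x` along a walk from the root of a component to `v` depends only on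
`v`, and for the set `S` of vertices where it is odd, `x ≡ δ(S) mod 2` on every edge. Finally
`2 e_ij = δ({i}) + δ({j}) - δ({i, j})`, so the even vector `x - δ(S)` lies in the lattice.
-/

open scoped Classical

/-- `e` is an edge crossing the vertex set `S` (exactly one endpoint in `S`). -/
def InCut {V : Type*} (S : Set V) (e : Sym2 V) : Prop :=
  ∃ i j, e = s(i, j) ∧ i ∈ S ∧ j ∉ S

/-- The integer cut vector `δ(S)` of a graph `G`, as a `{0,1}`-vector indexed by `Sym2 V`
(supported on the edges of `G`). -/
noncomputable def cutVecZ {V : Type*} (G : SimpleGraph V) (S : Set V) : Sym2 V → ℤ :=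
  fun e => if e ∈ G.edgeSet ∧ InCut S e then 1 else 0

lemma even_of_mem_span {M : Type*} [AddCommGroup M] [Module ℤ M] (f : M →ₗ[ℤ] ℤ)
    {s : Set M} (hs : ∀ y ∈ s, Even (f y)) {y : M} (hy : y ∈ Submodule.span ℤ s) :
    Even (f y) := by
  induction hy using Submodule.span_induction with
  | mem y hy => exact hs y hy
  | zero => simp
  | add a b _ _ ha hb => simpa using ha.add hb
  | smul c a _ ha => simpa using ha.mul_left c

namespace SimpleGraph.Walk

variable {V : Type*} {G : SimpleGraph V}

def edgeSum {u v : V} (w : G.Walk u v) : (Sym2 V → ℤ) →ₗ[ℤ] ℤ where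
  toFun x := (w.edges.map x).sum
  map_add' _ _ := List.sum_map_add
  map_smul' _ _ := List.sum_map_mul_left _ _ _

variable (x : Sym2 V → ℤ)

@[simp]
lemma edgeSum_nil {u : V} : (nil : G.Walk u u).edgeSum x = 0 := rfl

@[simp]
lemma edgeSum_cons {u v w : V} (h : G.Adj u v) (p : G.Walk v w) :
    (cons h p).edgeSum x = x s(u, v) + p.edgeSum x := by
  simp [edgeSum]

@[simp]
lemma edgeSum_append {u v w : V} (p : G.Walk u v) (q : G.Walk v w) :
    (p.append q).edgeSum x = p.edgeSum x + q.edgeSum x := by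
  simp [edgeSum]

@[simp]
lemma edgeSum_reverse {u v : V} (p : G.Walk u v) : p.reverse.edgeSum x = p.edgeSum x := by
  simp [edgeSum]

@[simp]
lemma edgeSum_copy {u v u' v' : V} (p : G.Walk u v) (hu : u = u') (hv : v = v') :
    (p.copy hu hv).edgeSum x = p.edgeSum x := by
  subst hu hv
  rfl

@[simp]
lemma edgeSum_concat {u v w : V} (p : G.Walk u v) (h : G.Adj v w) :
    (p.concat h).edgeSum x = p.edgeSum x + x s(v, w) := by
  simp [concat_eq_append]

lemma IsTrail.edgeSum_eq {u v : V} {w : G.Walk u v} (hw : w.IsTrail) :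
    w.edgeSum x = ∑ e ∈ w.edges.toFinset, x e :=
  (List.sum_toFinset x hw.edges_nodup).symm

section EvenCycles

variable {x} (hcyc : ∀ (u : V) (c : G.Walk u u), c.IsCycle → Even (c.edgeSum x))
include hcyc

lemma even_edgeSum_cons_of_isPath {u v : V} (h : G.Adj u v) {q : G.Walk v u} (hq : q.IsPath) :
    Even ((cons h q).edgeSum x) := by
  by_cases hmem : s(u, v) ∈ q.edges
  · cases q with
    | nil => simp at hmem
    | @cons _ w _ h' r =>
      rw [cons_isPath_iff] at hq
      have hr : s(u, v) ∉ r.edges := fun he => hq.2 (r.snd_mem_support_of_mem_edges he)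
      obtain rfl : w = u := by
        simp only [edges_cons, List.mem_cons, hr, or_false, Sym2.eq_iff] at hmem
        rcases hmem with ⟨rfl, -⟩ | ⟨rfl, -⟩
        · exact (h.ne rfl).elim
        · rfl
      obtain rfl := (isPath_iff_nil.1 hq.1).eq_nil
      simp [Sym2.eq_swap]
  · exact hcyc u _ ((cons_isCycle_iff q h).2 ⟨hq, hmem⟩)

lemma even_edgeSum_iff_bypass {u v : V} (p : G.Walk u v) :
    Even (p.edgeSum x) ↔ Even (p.bypass.edgeSum x) := by
  induction p with
  | nil => rfl
  | @cons u v w h p ih =>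
    simp only [bypass]
    split_ifs with hu
    · have hsplit := congrArg (edgeSum · x) (p.bypass.take_spec hu)
      simp only [edgeSum_append] at hsplit
      have hloop := even_edgeSum_cons_of_isPath hcyc h (p.bypass_isPath.takeUntil hu)
      rw [edgeSum_cons, Int.even_add] at hloop
      rw [edgeSum_cons, Int.even_add, ih, ← hsplit, Int.even_add]
      tauto
    · rw [edgeSum_cons, edgeSum_cons, Int.even_add, Int.even_add, ih]

lemma even_edgeSum_of_closed {u : V} (c : G.Walk u u) : Even (c.edgeSum x) := by
  rw [even_edgeSum_iff_bypass hcyc, (isPath_iff_nil.1 c.bypass_isPath).eq_nil]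
  exact Even.zero

lemma even_edgeSum_congr {u v : V} (p q : G.Walk u v) :
    Even (p.edgeSum x) ↔ Even (q.edgeSum x) := by
  have := even_edgeSum_of_closed hcyc (p.append q.reverse)
  rwa [edgeSum_append, edgeSum_reverse, Int.even_add] at this

end EvenCycles

end SimpleGraph.Walk

section Cuts

variable {V : Type*} {G : SimpleGraph V}

lemma inCut_mk_iff (S : Set V) (a b : V) : InCut S s(a, b) ↔ ¬(a ∈ S ↔ b ∈ S) := by
  constructor
  · rintro ⟨i, j, hij, hi, hj⟩
    rcases Sym2.eq_iff.1 hij with ⟨rfl, rfl⟩ | ⟨rfl, rfl⟩ <;> tauto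
  · intro h
    by_cases ha : a ∈ S
    · exact ⟨a, b, rfl, ha, by tauto⟩
    · exact ⟨b, a, Sym2.eq_swap, by tauto, ha⟩

lemma cutVecZ_mk_of_adj (S : Set V) {a b : V} (h : G.Adj a b) :
    cutVecZ G S s(a, b) = if a ∈ S ↔ b ∈ S then 0 else 1 := by
  by_cases hab : a ∈ S ↔ b ∈ S <;> simp [cutVecZ, h, inCut_mk_iff, hab]

lemma cutVecZ_of_notMem_edgeSet (S : Set V) {e : Sym2 V} (he : e ∉ G.edgeSet) :
    cutVecZ G S e = 0 := by
  simp [cutVecZ, he]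

lemma even_cutVecZ_mk_iff (S : Set V) {a b : V} (h : G.Adj a b) :
    Even (cutVecZ G S s(a, b)) ↔ (a ∈ S ↔ b ∈ S) := by
  rw [cutVecZ_mk_of_adj S h]
  split_ifs with hab <;> simp [hab]

lemma SimpleGraph.Walk.even_edgeSum_cutVecZ_iff (S : Set V) {u v : V} (w : G.Walk u v) :
    Even (w.edgeSum (cutVecZ G S)) ↔ (u ∈ S ↔ v ∈ S) := by
  induction w with
  | nil => simp
  | cons h p ih =>
    rw [Walk.edgeSum_cons, Int.even_add, even_cutVecZ_mk_iff S h, ih]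
    tauto

lemma cutVecZ_singleton_add_singleton_sub_pair {i j : V} (h : G.Adj i j) :
    cutVecZ G {i} + cutVecZ G {j} - cutVecZ G {i, j} = Pi.single s(i, j) 2 := by
  funext e
  induction e with
  | h a b =>
    by_cases hab : G.Adj a b
    · simp only [Pi.add_apply, Pi.sub_apply, cutVecZ_mk_of_adj _ hab, Set.mem_singleton_iff,
        Set.mem_insert_iff, Pi.single_apply, Sym2.eq_iff]
      have := hab.ne
      have := h.ne
      by_cases hai : a = i <;> by_cases haj : a = j <;> by_cases hbi : b = i <;>
        by_cases hbj : b = j <;> simp_all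
    · have hne : s(a, b) ≠ s(i, j) := fun he => hab (by rwa [← G.mem_edgeSet, he])
      simp [cutVecZ_of_notMem_edgeSet _ (G.mem_edgeSet.not.2 hab), hne]

lemma single_two_mem_span_cutVecZ {e : Sym2 V} (he : e ∈ G.edgeSet) :
    Pi.single e 2 ∈ Submodule.span ℤ (Set.range (cutVecZ G)) := by
  induction e with
  | h i j =>
    rw [← cutVecZ_singleton_add_singleton_sub_pair (G.mem_edgeSet.1 he)]
    have hmem (S : Set V) : cutVecZ G S ∈ Submodule.span ℤ (Set.range (cutVecZ G)) :=
      Submodule.subset_span (Set.mem_range_self S)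
    exact sub_mem (add_mem (hmem _) (hmem _)) (hmem _)

lemma mem_span_cutVecZ_of_even [Fintype V] {z : Sym2 V → ℤ} (hz : ∀ e ∉ G.edgeSet, z e = 0)
    (heven : ∀ a b, G.Adj a b → Even (z s(a, b))) :
    z ∈ Submodule.span ℤ (Set.range (cutVecZ G)) := by
  rw [← Finset.univ_sum_single z]
  refine Submodule.sum_mem _ fun e _ => ?_
  by_cases he : e ∈ G.edgeSet
  · induction e with
    | h a b =>
      obtain ⟨k, hk⟩ := (heven a b he).two_dvd
      rw [hk, mul_comm, ← smul_eq_mul, Pi.single_smul']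
      exact Submodule.smul_mem _ k (single_two_mem_span_cutVecZ he)
  · simp [hz e he]

end Cuts

open SimpleGraph.Walk in
lemma exists_even_sub_cutVecZ {V : Type*} {G : SimpleGraph V} {x : Sym2 V → ℤ}
    (hcyc : ∀ (u : V) (c : G.Walk u u), c.IsCycle → Even (c.edgeSum x)) :
    ∃ S : Set V, ∀ a b, G.Adj a b → Even (x s(a, b) - cutVecZ G S s(a, b)) := by
  have hroot (v : V) : G.Reachable (G.connectedComponentMk v).out v :=
    SimpleGraph.ConnectedComponent.exact (G.connectedComponentMk v).out_eq
  refine ⟨{v | ¬Even ((hroot v).some.edgeSum x)}, fun a b h => ?_⟩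
  have hr : (G.connectedComponentMk b).out = (G.connectedComponentMk a).out := by
    rw [SimpleGraph.ConnectedComponent.sound h.reachable]
  have hpar := even_edgeSum_congr hcyc ((hroot a).some.concat h) ((hroot b).some.copy hr rfl)
  rw [edgeSum_concat, edgeSum_copy, Int.even_add] at hpar
  rw [Int.even_sub, even_cutVecZ_mk_iff _ h]
  tauto

/-- For a finite simple graph `G` and an integer vector `x` indexed by edges,
`x` lies in the lattice generated by the cuts of `G` iff `x(C)` is even for every
circuit (edge set of a cycle) `C` of `G`. -/
theorem mem_latticeOfCuts_iff {V : Type*} [Fintype V] (G : SimpleGraph V)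
    (x : Sym2 V → ℤ) (hx : ∀ e ∉ G.edgeSet, x e = 0) :
    x ∈ Submodule.span ℤ (Set.range (cutVecZ G)) ↔
      ∀ (u : V) (w : G.Walk u u), w.IsCycle →
        Even (∑ e ∈ w.edges.toFinset, x e) := by
  have hsum {u : V} {w : G.Walk u u} (hw : w.IsCycle) :
      ∑ e ∈ w.edges.toFinset, x e = w.edgeSum x :=
    (hw.isTrail.edgeSum_eq x).symm
  constructor
  · intro hmem u w hw
    rw [hsum hw]
    refine even_of_mem_span w.edgeSum ?_ hmem
    rintro _ ⟨S, rfl⟩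
    exact (w.even_edgeSum_cutVecZ_iff S).2 Iff.rfl
  · intro heven
    obtain ⟨S, hS⟩ := exists_even_sub_cutVecZ fun u w hw => hsum hw ▸ heven u w hw
    have hrest : x - cutVecZ G S ∈ Submodule.span ℤ (Set.range (cutVecZ G)) := by
      refine mem_span_cutVecZ_of_even (fun e he => ?_) hS
      simp [hx e he, cutVecZ_of_notMem_edgeSet S he]
    simpa using add_mem (Submodule.subset_span (Set.mem_range_self S)) hrest
end

section
/- If a graph G is in the class 𝓗 (its cuts form a Hilbert basis) and e is an edge of G, then the contraction G/e is also in 𝓗. -/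
open scoped Classical

/-- The real cut vector `δ(S)` of a graph `G`. -/
noncomputable def cutVec {V : Type*} (G : SimpleGraph V) (S : Set V) : Sym2 V → ℝ :=
  fun e => if e ∈ G.edgeSet ∧ InCut S e then 1 else 0

/-- The cone generated by `X`: all finite nonnegative real combinations. -/
def coneOf {d : Type*} (X : Set (d → ℝ)) : Set (d → ℝ) :=
  {y | ∃ (s : Finset (d → ℝ)) (c : (d → ℝ) → ℝ),
    ↑s ⊆ X ∧ (∀ v ∈ s, 0 ≤ c v) ∧ y = ∑ v ∈ s, c v • v}

/-- The lattice generated by `X`: all finite integer combinations. -/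
def latticeOf {d : Type*} (X : Set (d → ℝ)) : Set (d → ℝ) :=
  {y | ∃ (s : Finset (d → ℝ)) (c : (d → ℝ) → ℤ),
    ↑s ⊆ X ∧ y = ∑ v ∈ s, (c v : ℝ) • v}

/-- The integer cone generated by `X`: all finite nonnegative integer combinations. -/
def intconeOf {d : Type*} (X : Set (d → ℝ)) : Set (d → ℝ) :=
  {y | ∃ (s : Finset (d → ℝ)) (c : (d → ℝ) → ℕ),
    ↑s ⊆ X ∧ y = ∑ v ∈ s, (c v : ℝ) • v}

/-- `X` is a Hilbert basis if `intcone(X) = cone(X) ∩ lattice(X)`. -/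
def IsHilbertBasis {d : Type*} (X : Set (d → ℝ)) : Prop :=
  intconeOf X = coneOf X ∩ latticeOf X

/-- Extension by zero at coordinate `e`. -/
noncomputable def ext0 {V : Type*} (e : Sym2 V) (y : {e' : Sym2 V // e' ≠ e} → ℝ) :
    Sym2 V → ℝ :=
  fun f => if h : f = e then 0 else y ⟨f, h⟩

/-- Restriction to coordinates `≠ e`. -/
def restr {V : Type*} (e : Sym2 V) (v : Sym2 V → ℝ) : {e' : Sym2 V // e' ≠ e} → ℝ :=
  fun e' => v e'.val

lemma restr_ext0 {V : Type*} (e : Sym2 V) (y : {e' : Sym2 V // e' ≠ e} → ℝ) :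
    restr e (ext0 e y) = y := by
  funext e'; simp [restr, ext0, e'.prop]

lemma ext0_restr {V : Type*} {e : Sym2 V} {v : Sym2 V → ℝ} (hv : v e = 0) :
    ext0 e (restr e v) = v := by
  funext f
  by_cases h : f = e
  · subst h; simp [ext0, hv]
  · simp [ext0, restr, h]

lemma ext0_inj {V : Type*} (e : Sym2 V) : Function.Injective (ext0 e) := by
  intro y z h
  have := congrArg (restr e) h
  rwa [restr_ext0, restr_ext0] at this

lemma ext0_sum {V : Type*} {R : Type*} [Ring R] [Module R ℝ] (e : Sym2 V)
    (s : Finset ({e' : Sym2 V // e' ≠ e} → ℝ)) (c : ({e' : Sym2 V // e' ≠ e} → ℝ) → R) :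
    ext0 e (∑ v ∈ s, c v • v) = ∑ v ∈ s, c v • ext0 e v := by
  funext f
  by_cases h : f = e
  · subst h
    simp [ext0, Finset.sum_apply]
  · simp [ext0, h, Finset.sum_apply]

lemma restr_sum {V : Type*} {R : Type*} [Ring R] [Module R ℝ] (e : Sym2 V)
    (s : Finset (Sym2 V → ℝ)) (c : (Sym2 V → ℝ) → R) :
    restr e (∑ v ∈ s, c v • v) = ∑ v ∈ s, c v • restr e v := by
  funext e'
  simp [restr, Finset.sum_apply]

lemma intcone_subset {d : Type*} (X : Set (d → ℝ)) :
    intconeOf X ⊆ coneOf X ∩ latticeOf X := by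
  rintro y ⟨s, c, hs, hy⟩
  constructor
  · exact ⟨s, fun v => (c v : ℝ), hs, fun v _ => by positivity, hy⟩
  · refine ⟨s, fun v => (c v : ℤ), hs, ?_⟩
    simpa using hy

/-- If the cuts of a finite graph `G` form a Hilbert basis, then so do the
cuts of the contraction `G/e`, for any edge `e` of `G`.  The cuts of `G/e` are exactly
the cuts of `G` not containing `e`, regarded as vectors on the coordinates `≠ e`. -/
theorem contraction_mem_H {V : Type*} [Fintype V] (G : SimpleGraph V)
    (e : Sym2 V) (he : e ∈ G.edgeSet)
    (hG : IsHilbertBasis (Set.range (cutVec G))) :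
    IsHilbertBasis {y : {e' : Sym2 V // e' ≠ e} → ℝ |
      ∃ S : Set V, cutVec G S e = 0 ∧ y = fun e' => cutVec G S e'.val} := by
  set Y := {y : {e' : Sym2 V // e' ≠ e} → ℝ |
      ∃ S : Set V, cutVec G S e = 0 ∧ y = fun e' => cutVec G S e'.val} with hYdef
  apply Set.Subset.antisymm (intcone_subset Y)
  rintro y ⟨⟨s, c, hs, hc, hy⟩, ⟨s', c', hs', hy'⟩⟩
  -- key: for generators of Y, ext0 lands in the cuts of G
  have hgen : ∀ v ∈ Y, ext0 e v ∈ Set.range (cutVec G) := by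
    rintro v ⟨S, hS0, rfl⟩
    refine ⟨S, ?_⟩
    have : (fun e' : {e' : Sym2 V // e' ≠ e} => cutVec G S e'.val) = restr e (cutVec G S) := rfl
    rw [this, ext0_restr hS0]
  -- ext0 y is in cone(X) ∩ lattice(X)
  have hcone : ext0 e y ∈ coneOf (Set.range (cutVec G)) := by
    refine ⟨s.image (ext0 e), fun w => c (restr e w), ?_, ?_, ?_⟩
    · intro w hw
      simp only [Finset.coe_image, Set.mem_image, Finset.mem_coe] at hw
      obtain ⟨v, hv, rfl⟩ := hw
      exact hgen v (hs hv)
    · intro w hw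
      simp only [Finset.mem_image] at hw
      obtain ⟨v, hv, rfl⟩ := hw
      simp only [restr_ext0]
      exact hc v hv
    · rw [Finset.sum_image (fun a _ b _ h => ext0_inj e h), hy, ext0_sum]
      exact Finset.sum_congr rfl fun v _ => by simp only [restr_ext0]
  have hlat : ext0 e y ∈ latticeOf (Set.range (cutVec G)) := by
    refine ⟨s'.image (ext0 e), fun w => c' (restr e w), ?_, ?_⟩
    · intro w hw
      simp only [Finset.coe_image, Set.mem_image, Finset.mem_coe] at hw
      obtain ⟨v, hv, rfl⟩ := hw
      exact hgen v (hs' hv)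
    · rw [Finset.sum_image (fun a _ b _ h => ext0_inj e h), hy', ext0_sum]
      exact Finset.sum_congr rfl fun v _ => by simp only [restr_ext0]
  have hint : ext0 e y ∈ intconeOf (Set.range (cutVec G)) := by
    rw [hG]; exact ⟨hcone, hlat⟩
  obtain ⟨t, n, ht, hty⟩ := hint
  -- each cut vector is nonnegative at e
  have hnn : ∀ v ∈ t, 0 ≤ v e := by
    intro v hv
    obtain ⟨S, rfl⟩ := ht hv
    unfold cutVec; positivity
  -- the value at e is 0
  have hzero : ∑ v ∈ t, (n v : ℝ) * v e = 0 := by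
    have := congrFun hty e
    simp only [ext0, dif_pos rfl, Finset.sum_apply, Pi.smul_apply, smul_eq_mul] at this
    exact this.symm
  have hterm : ∀ v ∈ t, (n v : ℝ) * v e = 0 := by
    intro v hv
    have h := (Finset.sum_eq_zero_iff_of_nonneg (fun v hv => by
      have := hnn v hv; positivity)).mp hzero
    exact h v hv
  -- restrict to cuts vanishing at e
  set t0 := t.filter (fun v => v e = 0) with ht0
  have hsum0 : ∑ v ∈ t, (n v : ℝ) • v = ∑ v ∈ t0, (n v : ℝ) • v := by
    refine (Finset.sum_subset (Finset.filter_subset _ _) ?_).symm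
    intro v hv hv0
    have hve : v e ≠ 0 := by
      intro h; exact hv0 (Finset.mem_filter.mpr ⟨hv, h⟩)
    have : (n v : ℝ) = 0 := by
      rcases mul_eq_zero.mp (hterm v hv) with h | h
      · exact h
      · exact absurd h hve
    rw [this, zero_smul]
  -- conclude
  refine ⟨t0.image (restr e), fun w => n (ext0 e w), ?_, ?_⟩
  · intro w hw
    simp only [Finset.coe_image, Set.mem_image, Finset.mem_coe] at hw
    obtain ⟨v, hv, rfl⟩ := hw
    have hv0 : v e = 0 := (Finset.mem_filter.mp hv).2
    obtain ⟨S, rfl⟩ := ht (Finset.mem_filter.mp hv).1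
    exact ⟨S, hv0, rfl⟩
  · have hinj : ∀ a ∈ t0, ∀ b ∈ t0, restr e a = restr e b → a = b := by
      intro a ha b hb h
      have ha0 : a e = 0 := (Finset.mem_filter.mp ha).2
      have hb0 : b e = 0 := (Finset.mem_filter.mp hb).2
      have := congrArg (ext0 e) h
      rwa [ext0_restr ha0, ext0_restr hb0] at this
    rw [Finset.sum_image hinj]
    have : y = restr e (ext0 e y) := (restr_ext0 e y).symm
    rw [this, hty, hsum0, restr_sum]
    refine Finset.sum_congr rfl fun v hv => ?_
    simp only [ext0_restr (Finset.mem_filter.mp hv).2]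
end

section
/- Let G be a graph and f an edge of G such that the deletion G∖f has cuts forming a Hilbert basis. Then for any x ∈ ℝ^{E(G)} whose restriction to E(G)∖{f} lies in both the cone and the lattice of cuts of G∖f, there exists a nonnegative integer γ such that the vector obtained from x by replacing the f-coordinate with γ lies in the nonnegative integer cone of the cuts of G. -/
open scoped Classical

/-- Let `f` be an edge of a finite graph `G` such that the cuts of
`G ∖ f` form a Hilbert basis.  If the restriction of `x` to `E(G) ∖ {f}` (encoded by
zeroing the `f`-coordinate) lies in both the cone and the lattice of the cuts of
`G ∖ f`, then there is a nonnegative integer `γ` such that `x` with its `f`-coordinate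
replaced by `γ` lies in the nonnegative integer cone of the cuts of `G`. -/
theorem exists_integer_fCoordinate {V : Type*} [Fintype V] (G : SimpleGraph V)
    (f : Sym2 V) (hf : f ∈ G.edgeSet) (x : Sym2 V → ℝ)
    (hH : IsHilbertBasis (Set.range (cutVec (G.deleteEdges {f}))))
    (hcone : Function.update x f 0 ∈ coneOf (Set.range (cutVec (G.deleteEdges {f}))))
    (hlat : Function.update x f 0 ∈ latticeOf (Set.range (cutVec (G.deleteEdges {f})))) :
    ∃ γ : ℕ, Function.update x f (γ : ℝ) ∈ intconeOf (Set.range (cutVec G)) := by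

  have hmem : Function.update x f 0 ∈ intconeOf (Set.range (cutVec (G.deleteEdges {f}))) := by
    rw [hH]; exact ⟨hcone, hlat⟩
  obtain ⟨s, c, hs, hsum⟩ := hmem
  have hS : ∀ v : {v // v ∈ s}, ∃ T : Set V, cutVec (G.deleteEdges {f}) T = v.1 :=
    fun v => hs v.2
  choose S hSspec using hS
  set g : {v // v ∈ s} → (Sym2 V → ℝ) := fun v => cutVec G (S v) with hg
  have hagree : ∀ (T : Set V) (e : Sym2 V), e ≠ f →
      cutVec (G.deleteEdges {f}) T e = cutVec G T e := by
    intro T e he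
    simp only [cutVec, SimpleGraph.edgeSet_deleteEdges, Set.mem_diff, Set.mem_singleton_iff]
    simp [he]
  have hfzero : ∀ (T : Set V), cutVec (G.deleteEdges {f}) T f = 0 := by
    intro T
    simp [cutVec, SimpleGraph.edgeSet_deleteEdges]
  have hginj : Function.Injective g := by
    intro v w hvw
    have hcv : cutVec (G.deleteEdges {f}) (S v) = cutVec (G.deleteEdges {f}) (S w) := by
      funext e
      by_cases he : e = f
      · subst he; rw [hfzero, hfzero]
      · rw [hagree _ _ he, hagree _ _ he]; exact congrFun hvw e
    apply Subtype.ext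
    rw [← hSspec v, ← hSspec w, hcv]
  set γ : ℕ := ∑ v ∈ s.attach, c v.1 * (if f ∈ G.edgeSet ∧ InCut (S v) f then 1 else 0)
    with hγdef
  have hγ : (γ : ℝ) = ∑ v ∈ s.attach, (c v.1 : ℝ) * cutVec G (S v) f := by
    rw [hγdef]
    push_cast
    refine Finset.sum_congr rfl fun v _ => ?_
    simp [cutVec, apply_ite (Nat.cast : ℕ → ℝ)]
  set c' : (Sym2 V → ℝ) → ℕ :=
    fun w => if h : ∃ v : {v // v ∈ s}, g v = w then c (Classical.choose h).1 else 0
    with hc'def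
  have hc' : ∀ v, c' (g v) = c v.1 := by
    intro v
    have h : ∃ u, g u = g v := ⟨v, rfl⟩
    rw [hc'def]
    simp only [dif_pos h]
    rw [hginj (Classical.choose_spec h)]
  refine ⟨γ, Finset.image g s.attach, c', ?_, ?_⟩
  · intro w hw
    simp only [Finset.coe_image, Set.mem_image, Finset.mem_coe] at hw
    obtain ⟨v, -, rfl⟩ := hw
    exact ⟨S v, rfl⟩
  · rw [Finset.sum_image (fun a _ b _ h => hginj h)]
    simp only [hc']
    funext e
    by_cases he : e = f
    · subst he
      rw [Function.update_self]
      rw [hγ, Finset.sum_apply]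
      refine Finset.sum_congr rfl fun v _ => ?_
      simp [hg]
    · rw [Function.update_of_ne he]
      have hx : x e = (Function.update x f 0) e := (Function.update_of_ne he _ _).symm
      rw [hx, hsum, Finset.sum_apply, ← Finset.sum_attach s (fun v => ((c v : ℝ) • v) e)]
      rw [Finset.sum_apply]
      refine Finset.sum_congr rfl fun v _ => ?_
      simp only [Pi.smul_apply, smul_eq_mul, hg]
      rw [← hagree (S v) e he, hSspec v]
end

section
/- Let x be an integer vector on the edges of K5 such that x(E(K5)) is even and x(C') is even for every circuit C' avoiding a fixed edge f. Then x(C) is even for every circuit C of K5, i.e., x lies in the lattice of cuts of K5. -/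
open scoped Classical


private def tri {V : Type*} [DecidableEq V] {a b c : V} (hab : a ≠ b) (hbc : b ≠ c)
    (hca : c ≠ a) : (⊤ : SimpleGraph V).Walk a a :=
  .cons (by simpa using hab) (.cons (by simpa using hbc) (.cons (by simpa using hca) .nil))

private lemma tri_edges {V : Type*} [DecidableEq V] {a b c : V} (hab : a ≠ b) (hbc : b ≠ c)
    (hca : c ≠ a) : (tri hab hbc hca).edges = [s(a,b), s(b,c), s(c,a)] := by
  simp [tri]

private lemma tri_isCycle {V : Type*} [DecidableEq V] {a b c : V} (hab : a ≠ b) (hbc : b ≠ c)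
    (hca : c ≠ a) : (tri hab hbc hca).IsCycle := by
  rw [SimpleGraph.Walk.isCycle_def]
  refine ⟨?_, by simp [tri], ?_⟩
  · rw [SimpleGraph.Walk.isTrail_def, tri_edges]
    simp [Sym2.eq_iff]
    tauto
  · simp [tri]
    tauto

private lemma even_iff_zmod {n : ℤ} : Even n ↔ ((n : ZMod 2) = 0) := by
  rw [even_iff_two_dvd, ZMod.intCast_zmod_eq_zero_iff_dvd n 2]
  norm_num

private lemma exists_third : ∀ a b : Fin 5, ∃ r : Fin 5, r ≠ a ∧ r ≠ b := by decide

private def gh (g : Fin 5 → ZMod 2) : Sym2 (Fin 5) → ZMod 2 :=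
  Sym2.lift ⟨fun a b => g a + g b, fun _ _ => by ring⟩

private lemma walk_sum (g : Fin 5 → ZMod 2) {u v : Fin 5}
    (w : (⊤ : SimpleGraph (Fin 5)).Walk u v) :
    (w.edges.map (gh g)).sum = g u + g v := by
  induction w with
  | nil => simp [CharTwo.add_self_eq_zero]
  | @cons p q s h w ih =>
    simp only [SimpleGraph.Walk.edges_cons, List.map_cons, List.sum_cons, ih, gh, Sym2.lift_mk]
    simp only [gh] at ih
    rw [ih]
    linear_combination (CharTwo.add_self_eq_zero (g q))

/-- Let `x` be an integer vector on the edges of `K₅` such that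
`x(E(K₅))` is even and `x(C')` is even for every circuit `C'` avoiding a fixed edge
`f`.  Then `x(C)` is even for every circuit `C` of `K₅` (equivalently, `x` lies in the
lattice of cuts of `K₅`). -/
theorem K5_even_on_all_circuits (f : Sym2 (Fin 5))
    (hf : f ∈ (⊤ : SimpleGraph (Fin 5)).edgeSet) (x : Sym2 (Fin 5) → ℤ)
    (htotal : Even (∑ e ∈ (⊤ : SimpleGraph (Fin 5)).edgeSet.toFinset, x e))
    (havoid : ∀ (u : Fin 5) (w : (⊤ : SimpleGraph (Fin 5)).Walk u u), w.IsCycle →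
      f ∉ w.edges → Even (∑ e ∈ w.edges.toFinset, x e)) :
    ∀ (u : Fin 5) (w : (⊤ : SimpleGraph (Fin 5)).Walk u u), w.IsCycle →
      Even (∑ e ∈ w.edges.toFinset, x e) := by
  induction f using Sym2.ind with | _ a b =>
  have hab : a ≠ b := by simpa using hf
  obtain ⟨r, hra, hrb⟩ := exists_third a b
  set g : Fin 5 → ZMod 2 := fun v => if v = r then 0 else ((x s(r, v) : ZMod 2)) with hg
  have hfr : ∀ z : Fin 5, s(a, b) ≠ s(r, z) ∧ s(a, b) ≠ s(z, r) := by
    intro z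
    constructor <;> intro h <;> rw [Sym2.eq_iff] at h <;>
      rcases h with ⟨h1, h2⟩ | ⟨h1, h2⟩
    · exact hra h1.symm
    · exact hrb h2.symm
    · exact hrb h2.symm
    · exact hra h1.symm
  -- evenness of triangle sums avoiding f
  have htriangle : ∀ u v w : Fin 5, u ≠ v → v ≠ w → w ≠ u →
      s(a, b) ∉ [s(u,v), s(v,w), s(w,u)] →
      ((x s(u,v) : ZMod 2)) + x s(v,w) + x s(w,u) = 0 := by
    intro u v w huv hvw hwu hnot
    have hc := havoid u (tri huv hvw hwu) (tri_isCycle huv hvw hwu)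
      (by rw [tri_edges]; exact hnot)
    rw [tri_edges] at hc
    rw [List.sum_toFinset x (by
      simp [Sym2.eq_iff]
      tauto)] at hc
    rw [even_iff_zmod] at hc
    simp only [List.map_cons, List.map_nil, List.sum_cons, List.sum_nil, add_zero] at hc
    push_cast at hc
    linear_combination hc
  -- the key relation for all edges except possibly f
  have hrel' : ∀ u v : Fin 5, u ≠ v → s(u, v) ≠ s(a, b) →
      ((x s(u,v) : ZMod 2)) = g u + g v := by
    intro u v huv hne
    rcases eq_or_ne u r with rfl | hur
    · simp [hg, Ne.symm huv]
    rcases eq_or_ne v r with rfl | hvr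
    · rw [Sym2.eq_swap]
      simp [hg, hur]
    · have h1 : r ≠ u := fun h => hur h.symm
      have ht := htriangle r u v h1 huv hvr ?_
      · have e1 : ((x s(r,u) : ZMod 2)) = g u := by simp [hg, hur]
        have e2 : ((x s(v,r) : ZMod 2)) = g v := by rw [Sym2.eq_swap]; simp [hg, hvr]
        rw [e1, e2] at ht
        linear_combination ht - CharTwo.add_self_eq_zero (g u) - CharTwo.add_self_eq_zero (g v)
      · simp only [List.mem_cons, List.not_mem_nil, or_false]
        push_neg
        exact ⟨(hfr u).1, Ne.symm hne, (hfr v).2⟩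
  -- the explicit edge finset of K5
  have hE : (⊤ : SimpleGraph (Fin 5)).edgeSet.toFinset =
      ({s(0,1), s(0,2), s(0,3), s(0,4), s(1,2), s(1,3), s(1,4), s(2,3), s(2,4), s(3,4)} :
        Finset (Sym2 (Fin 5))) := by decide
  -- sum of gh g over all edges is zero
  have hsum : ∑ e ∈ (⊤ : SimpleGraph (Fin 5)).edgeSet.toFinset, gh g e = 0 := by
    rw [hE]
    rw [show ({s(0,1), s(0,2), s(0,3), s(0,4), s(1,2), s(1,3), s(1,4), s(2,3), s(2,4), s(3,4)} :
        Finset (Sym2 (Fin 5))) = ({s(0,1), s(0,2), s(0,3), s(0,4), s(1,2), s(1,3), s(1,4),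
        s(2,3), s(2,4), s(3,4)} : Finset (Sym2 (Fin 5))) from rfl]
    rw [Finset.sum_insert (by decide), Finset.sum_insert (by decide),
      Finset.sum_insert (by decide), Finset.sum_insert (by decide),
      Finset.sum_insert (by decide), Finset.sum_insert (by decide),
      Finset.sum_insert (by decide), Finset.sum_insert (by decide),
      Finset.sum_insert (by decide), Finset.sum_singleton]
    simp only [gh, Sym2.lift_mk]
    linear_combination 2 * (CharTwo.add_self_eq_zero (g 0) + CharTwo.add_self_eq_zero (g 1) +
      CharTwo.add_self_eq_zero (g 2) + CharTwo.add_self_eq_zero (g 3) +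
      CharTwo.add_self_eq_zero (g 4))
  -- the relation also holds for f, using htotal
  have hrel : ∀ u v : Fin 5, u ≠ v → ((x s(u,v) : ZMod 2)) = gh g s(u,v) := by
    intro u v huv
    rcases eq_or_ne s(u, v) s(a, b) with heq | hne
    · -- f case
      have hmemE : s(u, v) ∈ (⊤ : SimpleGraph (Fin 5)).edgeSet.toFinset := by
        simp [huv]
      have h0 : (∑ e ∈ (⊤ : SimpleGraph (Fin 5)).edgeSet.toFinset, ((x e : ZMod 2))) = 0 := by
        rw [even_iff_zmod] at htotal
        push_cast at htotal
        exact htotal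
      -- every edge in the erase satisfies the relation
      have herase : ∀ e ∈ (⊤ : SimpleGraph (Fin 5)).edgeSet.toFinset.erase s(u, v),
          ((x e : ZMod 2)) = gh g e := by
        intro e he
        rw [Finset.mem_erase] at he
        obtain ⟨hene, heE⟩ := he
        induction e using Sym2.ind with | _ p q =>
        have hpq : p ≠ q := by
          simpa using (Set.mem_toFinset.mp heE)
        rw [hrel' p q hpq (by rw [← heq]; exact hene)]
        simp [gh]
      have h1 := Finset.add_sum_erase _ (fun e => ((x e : ZMod 2))) hmemE
      have h2 := Finset.add_sum_erase _ (gh g) hmemE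
      rw [Finset.sum_congr rfl herase] at h1
      rw [h0] at h1
      rw [hsum] at h2
      linear_combination h1 - h2
    · rw [hrel' u v huv hne]
      simp [gh]
  -- final argument: telescoping along the cycle
  intro u w hw
  rw [even_iff_zmod]
  rw [List.sum_toFinset x hw.isTrail.edges_nodup]
  push_cast
  have hmap : (w.edges.map (fun e => ((x e : ZMod 2)))) = w.edges.map (gh g) := by
    apply List.map_congr_left
    intro e he
    have heE := SimpleGraph.Walk.edges_subset_edgeSet w he
    induction e using Sym2.ind with | _ p q =>
    exact hrel p q (by simpa using heE)
  rw [List.map_map, show (Int.cast ∘ x : Sym2 (Fin 5) → ZMod 2) = fun e => ((x e : ZMod 2))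
    from rfl, hmap, walk_sum g w]
  exact CharTwo.add_self_eq_zero _
end

section
/- Let G1 and G2 be 2-connected graphs sharing exactly one edge f = uv (and its endpoints), and let x be an integer vector on E(G1 ∪ G2) ∖ {f} such that x extended by an integer value γ on f satisfies: all circuits of G1 through f have even x-weight. If additionally every circuit of the 2-sum G1 +_f G2 (circuits avoiding f within each Gi, and symmetric differences C1 Δ C2 of circuits Ci of Gi through f) has even x-weight, then all circuits of G2 through f also have even weight when f is assigned γ. -/
open scoped Classical

/-- A graph is 2-connected if it has at least 3 vertices and deleting any single
vertex leaves a connected graph. -/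
def TwoConnected {V : Type*} (G : SimpleGraph V) : Prop :=
  3 ≤ Nat.card V ∧ ∀ v : V, (G.induce {u | u ≠ v}).Connected

lemma exists_cycle_through_edge {V : Type*} [Fintype V] (G : SimpleGraph V)
    (hcard : 3 ≤ Nat.card V) (hconn : ∀ v : V, (G.induce {u | u ≠ v}).Connected)
    {u v : V} (h : G.Adj u v) :
    ∃ (a : V) (w : G.Walk a a), w.IsCycle ∧ s(u, v) ∈ w.edges := by
  classical
  have hvu : v ≠ u := h.ne'
  -- find a neighbor t of v with t ≠ u
  have hnontriv : Nontrivial {x : V // x ≠ u} := by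
    rw [← Fintype.one_lt_card_iff_nontrivial]
    have h1 : Fintype.card {x : V // x = u} = 1 := Fintype.card_subtype_eq u
    have h2 : Fintype.card {x : V // x ≠ u} = Fintype.card V - Fintype.card {x : V // x = u} :=
      Fintype.card_subtype_compl _
    have h3 : 3 ≤ Fintype.card V := by rwa [Nat.card_eq_fintype_card] at hcard
    omega
  set a : {x : V // x ≠ u} := ⟨v, hvu⟩ with ha
  obtain ⟨z, hz⟩ := exists_ne a
  obtain ⟨p⟩ := ((hconn u).preconnected z a).symm
  obtain ⟨t, hvt, htu⟩ : ∃ t : V, G.Adj v t ∧ t ≠ u := by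
    cases p with
    | nil => exact absurd rfl hz.symm
    | @cons x y z hadj q => exact ⟨y.1, hadj, y.2⟩
  have htv : t ≠ v := hvt.ne'
  have huv : u ≠ v := h.ne
  -- path from t to u in G minus v
  obtain ⟨q⟩ := (hconn v).preconnected ⟨t, htv⟩ ⟨u, huv⟩
  let φ : G.induce {x | x ≠ v} →g G := ⟨Subtype.val, fun hab => hab⟩
  let P : G.Walk t u := (q.toPath : _).1.map φ
  have hP : P.IsPath :=
    SimpleGraph.Walk.map_isPath_of_injective Subtype.val_injective (q.toPath).2
  have hvP : v ∉ P.support := by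
    simp only [P, SimpleGraph.Walk.support_map, List.mem_map]
    rintro ⟨⟨x, hx⟩, -, hxv⟩
    exact hx hxv
  refine ⟨u, SimpleGraph.Walk.cons h (SimpleGraph.Walk.cons hvt P), ?_, ?_⟩
  · rw [SimpleGraph.Walk.cons_isCycle_iff]
    constructor
    · rw [SimpleGraph.Walk.cons_isPath_iff]; exact ⟨hP, hvP⟩
    · simp only [SimpleGraph.Walk.edges_cons, List.mem_cons]
      rintro (he | he)
      · rw [Sym2.eq_iff] at he
        rcases he with ⟨rfl, rfl⟩ | ⟨rfl, -⟩
        · exact htv rfl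
        · exact htu rfl
      · exact hvP (SimpleGraph.Walk.snd_mem_support_of_mem_edges P he)
  · simp

/-- Let `G₁, G₂` be 2-connected graphs sharing exactly one edge
`f = uv` (modelled on separate vertex types, with `fᵢ = s(uᵢ,vᵢ)` the two copies of
`f`), and let `x₁, x₂` be integer edge-weightings agreeing with a value `γ` on `f`.
If every circuit of `G₁` through `f` has even weight, and every circuit of the 2-sum
`G₁ +_f G₂` — i.e. every circuit of `Gᵢ` avoiding `f`, and every symmetric difference
`C₁ Δ C₂` of circuits `Cᵢ` of `Gᵢ` through `f` — has even weight, then every circuit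
of `G₂` through `f` has even weight (with `f` assigned `γ`). -/
theorem twoSum_lattice_claim {V₁ V₂ : Type*} [Fintype V₁] [Fintype V₂]
    (G₁ : SimpleGraph V₁) (G₂ : SimpleGraph V₂)
    (h2c₁ : TwoConnected G₁) (h2c₂ : TwoConnected G₂)
    (u₁ v₁ : V₁) (u₂ v₂ : V₂) (hadj₁ : G₁.Adj u₁ v₁) (hadj₂ : G₂.Adj u₂ v₂)
    (x₁ : Sym2 V₁ → ℤ) (x₂ : Sym2 V₂ → ℤ) (γ : ℤ)
    (hx₁f : x₁ s(u₁, v₁) = γ) (hx₂f : x₂ s(u₂, v₂) = γ)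
    (hG₁through : ∀ (a : V₁) (w : G₁.Walk a a), w.IsCycle → s(u₁, v₁) ∈ w.edges →
      Even (∑ e ∈ w.edges.toFinset, x₁ e))
    (hG₁avoid : ∀ (a : V₁) (w : G₁.Walk a a), w.IsCycle → s(u₁, v₁) ∉ w.edges →
      Even (∑ e ∈ w.edges.toFinset, x₁ e))
    (hG₂avoid : ∀ (b : V₂) (w : G₂.Walk b b), w.IsCycle → s(u₂, v₂) ∉ w.edges →
      Even (∑ e ∈ w.edges.toFinset, x₂ e))
    (hmix : ∀ (a : V₁) (b : V₂) (w₁ : G₁.Walk a a) (w₂ : G₂.Walk b b),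
      w₁.IsCycle → w₂.IsCycle → s(u₁, v₁) ∈ w₁.edges → s(u₂, v₂) ∈ w₂.edges →
      Even ((∑ e ∈ w₁.edges.toFinset \ {s(u₁, v₁)}, x₁ e) +
            (∑ e ∈ w₂.edges.toFinset \ {s(u₂, v₂)}, x₂ e))) :
    ∀ (b : V₂) (w : G₂.Walk b b), w.IsCycle → s(u₂, v₂) ∈ w.edges →
      Even (∑ e ∈ w.edges.toFinset, x₂ e) := by
  obtain ⟨a, c₁, hc₁, hf₁⟩ := exists_cycle_through_edge G₁ h2c₁.1 h2c₁.2 hadj₁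
  intro b w hw hf₂
  have hmem₁ : s(u₁, v₁) ∈ c₁.edges.toFinset := List.mem_toFinset.2 hf₁
  have hmem₂ : s(u₂, v₂) ∈ w.edges.toFinset := List.mem_toFinset.2 hf₂
  set A : ℤ := ∑ e ∈ c₁.edges.toFinset \ {s(u₁, v₁)}, x₁ e with hA
  set B : ℤ := ∑ e ∈ w.edges.toFinset \ {s(u₂, v₂)}, x₂ e with hB
  have split₁ : ∑ e ∈ c₁.edges.toFinset, x₁ e = A + γ := by
    rw [hA, Finset.sdiff_singleton_eq_erase, ← hx₁f, Finset.sum_erase_add _ _ hmem₁]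
  have split₂ : ∑ e ∈ w.edges.toFinset, x₂ e = B + γ := by
    rw [hB, Finset.sdiff_singleton_eq_erase, ← hx₂f, Finset.sum_erase_add _ _ hmem₂]
  obtain ⟨k, hk⟩ := hG₁through a c₁ hc₁ hf₁
  obtain ⟨m, hm⟩ := hmix a b c₁ w hc₁ hw hf₁ hf₂
  rw [split₁] at hk
  rw [split₂]
  exact ⟨m + k - A, by omega⟩
end

section
/- Let G1 and G2 be graphs with V(G1) ∩ V(G2) = {u,v} and let G be their 2-sum along f = uv (glue and delete f from both). If x1 = Σ_{i=1}^{j} δ_{G1}(A_i) and x2 = Σ_{i=1}^{k} δ_{G2}(B_i) with each A_i, B_i containing u but not v for i ≤ γ and containing neither u nor v for i > γ (same γ for both), then the concatenation of x1 and x2 restricted to E(G) equals Σ_{i=1}^{γ} δ_G(A_i ∪ B_i) + Σ_{i=γ+1}^{j} δ_G(A_i) + Σ_{i=γ+1}^{k} δ_G(B_i); in particular it lies in the nonnegative integer cone of cuts of G. -/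
/-!
An edge of the 2-sum `G` other than `f = uv` lies in exactly one of `G₁`, `G₂`, say in `G₁`.
Both of its endpoints are then vertices of `G₁`, and on those vertices a set `Bᵢ` can only
contain `u` or `v`: it is empty there when `i ≥ γ`, and inside `Aᵢ` when `i < γ`, because
both `Aᵢ` and `Bᵢ` meet `{u, v}` exactly in `u`. So on this edge `δ_G(Aᵢ ∪ Bᵢ)` and `δ_G(Aᵢ)`
read as `δ_{G₁}(Aᵢ)`, while `δ_G(Bᵢ)` for `i ≥ γ` and every `δ_{G₂}(Bᵢ)` vanish.
-/

open scoped Classical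

open Finset

lemma closure_subset_intconeOf {d : Type*} (X : Set (d → ℝ)) :
    (AddSubmonoid.closure X : Set (d → ℝ)) ⊆ intconeOf X := by
  intro y hy
  obtain ⟨m, hmX, rfl⟩ := AddSubmonoid.exists_multiset_of_mem_closure hy
  refine ⟨m.toFinset, m.count, fun x hx => hmX x (Multiset.mem_toFinset.mp hx), ?_⟩
  simp only [Nat.cast_smul_eq_nsmul]
  exact Finset.sum_multiset_count m

section Cuts

variable {V : Type*}

lemma inCut_congr {S T : Set V} {e : Sym2 V} (h : ∀ x ∈ e, x ∈ S ↔ x ∈ T) :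
    InCut S e ↔ InCut T e := by
  constructor <;> rintro ⟨a, b, rfl, ha, hb⟩
  · exact ⟨a, b, rfl, (h a (Sym2.mem_mk_left a b)).mp ha,
      mt (h b (Sym2.mem_mk_right a b)).mpr hb⟩
  · exact ⟨a, b, rfl, (h a (Sym2.mem_mk_left a b)).mpr ha,
      mt (h b (Sym2.mem_mk_right a b)).mp hb⟩

lemma cutVec_apply_of_notMem_edgeSet {G : SimpleGraph V} {S : Set V} {e : Sym2 V}
    (he : e ∉ G.edgeSet) : cutVec G S e = 0 :=
  if_neg fun h => he h.1

lemma cutVec_apply_congr {G H : SimpleGraph V} {S T : Set V} {e : Sym2 V}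
    (hGH : e ∈ G.edgeSet ↔ e ∈ H.edgeSet) (hST : ∀ x ∈ e, x ∈ S ↔ x ∈ T) :
    cutVec G S e = cutVec H T e := by
  simp only [cutVec, hGH, inCut_congr hST]

lemma cutVec_apply_of_forall_notMem {G : SimpleGraph V} {S : Set V} {e : Sym2 V}
    (h : ∀ x ∈ e, x ∉ S) : cutVec G S e = 0 := by
  refine if_neg ?_
  rintro ⟨-, a, b, rfl, ha, -⟩
  exact h a (Sym2.mem_mk_left a b) ha

end Cuts

section TwoSum

variable {V : Type*} {G₁ G₂ : SimpleGraph V} {u v : V}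

lemma mem_edgeSet_deleteEdges_sup {e : Sym2 V} :
    e ∈ ((G₁ ⊔ G₂).deleteEdges {s(u, v)}).edgeSet ↔
      (e ∈ G₁.edgeSet ∨ e ∈ G₂.edgeSet) ∧ e ≠ s(u, v) := by
  rw [SimpleGraph.edgeSet_deleteEdges, SimpleGraph.edgeSet_sup]
  rfl

lemma eq_of_adj_of_adj (hsupp : G₁.support ∩ G₂.support ⊆ {u, v}) {a b : V}
    (h₁ : G₁.Adj a b) (h₂ : G₂.Adj a b) : s(a, b) = s(u, v) := by
  have ha := hsupp ⟨h₁.left_mem_support, h₂.left_mem_support⟩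
  have hb := hsupp ⟨h₁.right_mem_support, h₂.right_mem_support⟩
  have hab := h₁.ne
  simp only [Set.mem_insert_iff, Set.mem_singleton_iff] at ha hb
  rcases ha with rfl | rfl <;> rcases hb with rfl | rfl <;> simp_all [Sym2.eq_swap]

lemma sum_cutVec_apply_of_adj_left (hsupp : G₁.support ∩ G₂.support ⊆ {u, v})
    {A B : ℕ → Set V} {γ j k : ℕ} (hγj : γ ≤ j) (hB : ∀ i, B i ⊆ G₂.support ∪ {u, v})
    (hAuv : ∀ i < γ, u ∈ A i ∧ v ∉ A i) (hBuv : ∀ i < γ, u ∈ B i ∧ v ∉ B i)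
    (hB0 : ∀ i, γ ≤ i → B i ∩ {u, v} = ∅) {a b : V} (hab : G₁.Adj a b)
    (hf : s(a, b) ≠ s(u, v)) :
    ∑ i ∈ range j, cutVec G₁ (A i) s(a, b) + ∑ i ∈ range k, cutVec G₂ (B i) s(a, b)
      = ∑ i ∈ range γ, cutVec ((G₁ ⊔ G₂).deleteEdges {s(u, v)}) (A i ∪ B i) s(a, b)
        + ∑ i ∈ Ico γ j, cutVec ((G₁ ⊔ G₂).deleteEdges {s(u, v)}) (A i) s(a, b)
        + ∑ i ∈ Ico γ k, cutVec ((G₁ ⊔ G₂).deleteEdges {s(u, v)}) (B i) s(a, b) := by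
  have heG : s(a, b) ∈ ((G₁ ⊔ G₂).deleteEdges {s(u, v)}).edgeSet ↔ s(a, b) ∈ G₁.edgeSet :=
    iff_of_true (mem_edgeSet_deleteEdges_sup.mpr ⟨Or.inl hab, hf⟩) hab
  have he₂ : s(a, b) ∉ G₂.edgeSet := fun h₂ => hf (eq_of_adj_of_adj hsupp hab h₂)
  have hB_uv : ∀ i, ∀ x ∈ s(a, b), x ∈ B i → x ∈ ({u, v} : Set V) := by
    intro i x hx hxB
    have hx₁ : x ∈ G₁.support := by
      rcases Sym2.mem_iff.mp hx with rfl | rfl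
      exacts [hab.left_mem_support, hab.right_mem_support]
    exact (hB i hxB).elim (fun hx₂ => hsupp ⟨hx₁, hx₂⟩) id
  have h_union : ∀ i ∈ range γ, cutVec ((G₁ ⊔ G₂).deleteEdges {s(u, v)}) (A i ∪ B i) s(a, b)
      = cutVec G₁ (A i) s(a, b) := by
    intro i hi
    have hiγ := mem_range.mp hi
    refine cutVec_apply_congr heG fun x hx => or_iff_left_of_imp fun hxB => ?_
    rcases hB_uv i x hx hxB with rfl | rfl
    exacts [(hAuv i hiγ).1, absurd hxB (hBuv i hiγ).2]
  have h_B : ∀ i ∈ Ico γ k, cutVec ((G₁ ⊔ G₂).deleteEdges {s(u, v)}) (B i) s(a, b) = 0 :=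
    fun i hi => cutVec_apply_of_forall_notMem fun x hx hxB =>
      (hB0 i (mem_Ico.mp hi).1).subset ⟨hxB, hB_uv i x hx hxB⟩
  rw [sum_eq_zero fun i _ => cutVec_apply_of_notMem_edgeSet he₂, sum_eq_zero h_B,
    sum_congr rfl h_union, sum_congr rfl fun i _ => cutVec_apply_congr heG fun _ _ => Iff.rfl,
    add_zero, add_zero, sum_range_add_sum_Ico _ hγj]

lemma twoSum_concat_eq_sum_cutVec (hsupp : G₁.support ∩ G₂.support ⊆ {u, v})
    {A B : ℕ → Set V} {γ j k : ℕ} (hγj : γ ≤ j) (hγk : γ ≤ k)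
    (hA : ∀ i, A i ⊆ G₁.support ∪ {u, v}) (hB : ∀ i, B i ⊆ G₂.support ∪ {u, v})
    (hAuv : ∀ i < γ, u ∈ A i ∧ v ∉ A i) (hBuv : ∀ i < γ, u ∈ B i ∧ v ∉ B i)
    (hA0 : ∀ i, γ ≤ i → A i ∩ {u, v} = ∅) (hB0 : ∀ i, γ ≤ i → B i ∩ {u, v} = ∅) :
    Function.update
        ((∑ i ∈ range j, cutVec G₁ (A i)) + ∑ i ∈ range k, cutVec G₂ (B i)) s(u, v) 0
      = (∑ i ∈ range γ, cutVec ((G₁ ⊔ G₂).deleteEdges {s(u, v)}) (A i ∪ B i))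
        + (∑ i ∈ Ico γ j, cutVec ((G₁ ⊔ G₂).deleteEdges {s(u, v)}) (A i))
        + (∑ i ∈ Ico γ k, cutVec ((G₁ ⊔ G₂).deleteEdges {s(u, v)}) (B i)) := by
  funext e
  induction e using Sym2.ind with | _ a b => ?_
  by_cases hf : s(a, b) = s(u, v)
  · have hf_notMem : s(u, v) ∉ ((G₁ ⊔ G₂).deleteEdges {s(u, v)}).edgeSet :=
      fun h => (mem_edgeSet_deleteEdges_sup.mp h).2 rfl
    simp only [hf, Function.update_self, Pi.add_apply, Finset.sum_apply,
      cutVec_apply_of_notMem_edgeSet hf_notMem, sum_const_zero, add_zero]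
  rw [Function.update_of_ne hf]
  simp only [Pi.add_apply, Finset.sum_apply]
  by_cases h₁ : G₁.Adj a b
  · exact sum_cutVec_apply_of_adj_left hsupp hγj hB hAuv hBuv hB0 h₁ hf
  by_cases h₂ : G₂.Adj a b
  · have h := sum_cutVec_apply_of_adj_left (Set.inter_comm _ _ ▸ hsupp) hγk hA hBuv hAuv hA0
      h₂ hf (A := B) (B := A) (j := k) (k := j)
    simp only [sup_comm G₂, Set.union_comm (B _)] at h
    linarith
  have he : s(a, b) ∉ ((G₁ ⊔ G₂).deleteEdges {s(u, v)}).edgeSet :=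
    fun h => (mem_edgeSet_deleteEdges_sup.mp h).1.elim h₁ h₂
  simp only [cutVec_apply_of_notMem_edgeSet he,
    cutVec_apply_of_notMem_edgeSet (e := s(a, b)) h₁,
    cutVec_apply_of_notMem_edgeSet (e := s(a, b)) h₂, sum_const_zero, add_zero]

end TwoSum

theorem twoSum_concat_decomposition_general {V : Type*}
    (G₁ G₂ : SimpleGraph V) (u v : V)
    (hsupp : G₁.support ∩ G₂.support ⊆ {u, v})
    (A B : ℕ → Set V) (γ j k : ℕ) (hγj : γ ≤ j) (hγk : γ ≤ k)
    (hA : ∀ i, A i ⊆ G₁.support ∪ {u, v}) (hB : ∀ i, B i ⊆ G₂.support ∪ {u, v})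
    (hAuv : ∀ i < γ, u ∈ A i ∧ v ∉ A i) (hBuv : ∀ i < γ, u ∈ B i ∧ v ∉ B i)
    (hA0 : ∀ i, γ ≤ i → A i ∩ {u, v} = ∅) (hB0 : ∀ i, γ ≤ i → B i ∩ {u, v} = ∅) :
    Function.update
        ((∑ i ∈ Finset.range j, cutVec G₁ (A i)) + ∑ i ∈ Finset.range k, cutVec G₂ (B i))
        s(u, v) 0
      = (∑ i ∈ Finset.range γ, cutVec ((G₁ ⊔ G₂).deleteEdges {s(u, v)}) (A i ∪ B i))
        + (∑ i ∈ Finset.Ico γ j, cutVec ((G₁ ⊔ G₂).deleteEdges {s(u, v)}) (A i))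
        + (∑ i ∈ Finset.Ico γ k, cutVec ((G₁ ⊔ G₂).deleteEdges {s(u, v)}) (B i))
      ∧ Function.update
          ((∑ i ∈ Finset.range j, cutVec G₁ (A i)) + ∑ i ∈ Finset.range k, cutVec G₂ (B i))
          s(u, v) 0
        ∈ intconeOf (Set.range (cutVec ((G₁ ⊔ G₂).deleteEdges {s(u, v)}))) := by
  have key := twoSum_concat_eq_sum_cutVec hsupp hγj hγk hA hB hAuv hBuv hA0 hB0
  refine ⟨key, key ▸ closure_subset_intconeOf _ ?_⟩
  have hcut : ∀ S, cutVec ((G₁ ⊔ G₂).deleteEdges {s(u, v)}) S ∈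
      AddSubmonoid.closure (Set.range (cutVec ((G₁ ⊔ G₂).deleteEdges {s(u, v)}))) :=
    fun S => AddSubmonoid.subset_closure ⟨S, rfl⟩
  exact add_mem (add_mem (sum_mem fun i _ => hcut _) (sum_mem fun i _ => hcut _))
    (sum_mem fun i _ => hcut _)

/-- Let `G₁, G₂` be graphs (on a common ambient vertex type) with
`V(G₁) ∩ V(G₂) = {u,v}`, and `G` their 2-sum along `f = uv`.  Given cut decompositions
`x₁ = ∑_{i<j} δ_{G₁}(Aᵢ)`, `x₂ = ∑_{i<k} δ_{G₂}(Bᵢ)` in which, for the same `γ`, the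
sets `Aᵢ, Bᵢ` contain `u` but not `v` for `i < γ` and neither `u` nor `v` for `i ≥ γ`,
the concatenation of `x₁` and `x₂` on `E(G)` (encoded by zeroing the `f`-coordinate of
`x₁ + x₂`) equals `∑_{i<γ} δ_G(Aᵢ ∪ Bᵢ) + ∑_{γ≤i<j} δ_G(Aᵢ) + ∑_{γ≤i<k} δ_G(Bᵢ)`;
in particular it lies in the nonnegative integer cone of the cuts of `G`. -/
theorem twoSum_concat_decomposition {V : Type*} [Fintype V]
    (G₁ G₂ : SimpleGraph V) (u v : V) (hadj₁ : G₁.Adj u v) (hadj₂ : G₂.Adj u v)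
    (hsupp : G₁.support ∩ G₂.support ⊆ {u, v})
    (A B : ℕ → Set V) (γ j k : ℕ) (hγj : γ ≤ j) (hγk : γ ≤ k)
    (hA : ∀ i, A i ⊆ G₁.support ∪ {u, v}) (hB : ∀ i, B i ⊆ G₂.support ∪ {u, v})
    (hAuv : ∀ i < γ, u ∈ A i ∧ v ∉ A i) (hBuv : ∀ i < γ, u ∈ B i ∧ v ∉ B i)
    (hA0 : ∀ i, γ ≤ i → A i ∩ {u, v} = ∅) (hB0 : ∀ i, γ ≤ i → B i ∩ {u, v} = ∅) :
    Function.update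
        ((∑ i ∈ Finset.range j, cutVec G₁ (A i)) + ∑ i ∈ Finset.range k, cutVec G₂ (B i))
        s(u, v) 0
      = (∑ i ∈ Finset.range γ, cutVec ((G₁ ⊔ G₂).deleteEdges {s(u, v)}) (A i ∪ B i))
        + (∑ i ∈ Finset.Ico γ j, cutVec ((G₁ ⊔ G₂).deleteEdges {s(u, v)}) (A i))
        + (∑ i ∈ Finset.Ico γ k, cutVec ((G₁ ⊔ G₂).deleteEdges {s(u, v)}) (B i))
      ∧ Function.update
          ((∑ i ∈ Finset.range j, cutVec G₁ (A i)) + ∑ i ∈ Finset.range k, cutVec G₂ (B i))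
          s(u, v) 0
        ∈ intconeOf (Set.range (cutVec ((G₁ ⊔ G₂).deleteEdges {s(u, v)}))) :=
  twoSum_concat_decomposition_general G₁ G₂ u v hsupp A B γ j k hγj hγk hA hB hAuv hBuv hA0 hB0
end

section
/- If G is a graph whose cuts form a Hilbert basis and a vector x ∈ cone(𝓑(G)) ∩ lattice(𝓑(G)) lies on a face F of cone(𝓑(G)), then x is a nonnegative integer combination of the cuts lying on F. -/
open scoped Classical

lemma mem_coneOf_self {d : Type*} {X : Set (d → ℝ)} {v : d → ℝ} (hv : v ∈ X) :
    v ∈ coneOf X := by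
  refine ⟨{v}, fun _ => 1, by simpa, fun _ _ => zero_le_one, by simp⟩

/-- If the cuts of a finite graph `G` form a Hilbert basis and a vector
`x ∈ cone(𝓑(G)) ∩ lattice(𝓑(G))` lies on a face `F = {z : a·z = 0}` of the cone
(where `a·z ≤ 0` holds on the whole cone), then `x` is a nonnegative integer
combination of the cuts lying on `F`. -/
theorem face_intcone {V : Type*} [Fintype V] (G : SimpleGraph V)
    (hH : IsHilbertBasis (Set.range (cutVec G))) (a : Sym2 V → ℝ)
    (hsupp : ∀ z ∈ coneOf (Set.range (cutVec G)), ∑ e : Sym2 V, a e * z e ≤ 0)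
    (x : Sym2 V → ℝ)
    (hx : x ∈ coneOf (Set.range (cutVec G)) ∩ latticeOf (Set.range (cutVec G)))
    (hface : ∑ e : Sym2 V, a e * x e = 0) :
    x ∈ intconeOf {b | b ∈ Set.range (cutVec G) ∧ ∑ e : Sym2 V, a e * b e = 0} := by
  have hxint : x ∈ intconeOf (Set.range (cutVec G)) := hH ▸ hx
  obtain ⟨s, c, hs, hxe⟩ := hxint
  have hswap : ∑ e : Sym2 V, a e * x e = ∑ v ∈ s, (c v : ℝ) * ∑ e : Sym2 V, a e * v e := by
    rw [hxe]
    simp only [Finset.sum_apply, Pi.smul_apply, smul_eq_mul, Finset.mul_sum]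
    rw [Finset.sum_comm]
    exact Finset.sum_congr rfl fun v _ => Finset.sum_congr rfl fun e _ => by ring
  have hterm : ∀ v ∈ s, (c v : ℝ) * ∑ e : Sym2 V, a e * v e ≤ 0 := fun v hv =>
    mul_nonpos_of_nonneg_of_nonpos (Nat.cast_nonneg _)
      (hsupp v (mem_coneOf_self (hs hv)))
  have hzero : ∀ v ∈ s, (c v : ℝ) * ∑ e : Sym2 V, a e * v e = 0 := by
    have := (Finset.sum_eq_zero_iff_of_nonpos hterm).mp (hswap ▸ hface)
    exact this
  refine ⟨s.filter (fun v => c v ≠ 0), c, ?_, ?_⟩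
  · intro v hv
    simp only [Finset.coe_filter, Set.mem_setOf_eq] at hv
    obtain ⟨hvs, hvc⟩ := hv
    refine ⟨hs hvs, ?_⟩
    have hcne : (c v : ℝ) ≠ 0 := Nat.cast_ne_zero.mpr hvc
    exact (mul_eq_zero.mp (hzero v hvs)).resolve_left hcne
  · rw [hxe]
    refine (Finset.sum_filter_of_ne ?_).symm
    intro v _ h hc
    apply h
    rw [hc]
    simp
end
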